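/- Fix integers 0 < λ < g and a symmetric λ × λ integer matrix M₀, and let M be the g × g block-diagonal matrix with blocks M₀ and 0. Let A ∈ GL(g, ℤ) satisfy A M Aᵀ ≡ M (mod 2), and write A in block form [[A₀, A₀₁],[A₁₀, A₁]] with A₀ of size λ × λ. If det(M₀) is odd, then A₀ M₀ A₀ᵀ ≡ M₀ (mod 2), A₁₀ ≡ 0 (mod 2), and every diagonal entry of A₁₀ M₀ A₁₀ᵀ is divisible by 4. -/

import Mathlib

/-!
Since `M` vanishes off the `l × l` corner, `A M Aᵀ` only sees the first `l` columns of `A`.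
Reduced mod 2 (write `B = A mod 2`, `N = M₀ mod 2`, with `N` invertible), the hypothesis gives
`B₀ N B₀ᵀ = N` and `B₁₀ N B₀ᵀ = 0`. The first identity makes `N B₀ᵀ` invertible, so the
second forces `B₁₀ = 0`.
Writing `A₁₀ = 2Y` then gives `A₁₀ M₀ A₁₀ᵀ = 4 Y M₀ Yᵀ`.
-/

open Matrix

namespace Matrix

variable {ι κ m n R : Type*} [Fintype ι] [Fintype κ]

theorem mul_mul_transpose_eq_of_eq_zero_off_range [CommSemiring R] (e : ι → κ)
    (he : Function.Injective e) {M₀ : Matrix ι ι R} {M : Matrix κ κ R}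
    (hMe : ∀ a b, M (e a) (e b) = M₀ a b)
    (hM : ∀ i j, i ∉ Set.range e ∨ j ∉ Set.range e → M i j = 0)
    (A : Matrix m κ R) (B : Matrix n κ R) :
    A * M * Bᵀ = A.submatrix id e * M₀ * (B.submatrix id e)ᵀ := by
  ext i j
  simp only [mul_apply, submatrix_apply, transpose_apply, id]
  refine (Fintype.sum_of_injective e he _ _ (fun k hk => ?_) fun b => ?_).symm
  · simp [hM _ k (.inr hk)]
  · congr 1
    exact Fintype.sum_of_injective e he _ _ (fun k hk => by simp [hM k _ (.inl hk)])
      fun a => by rw [hMe]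

theorem eq_zero_of_mul_mul_eq_self [DecidableEq ι] [CommRing R] {B₀ N C : Matrix ι ι R}
    {B₁ : Matrix m ι R} (hN : IsUnit N.det) (h₀ : B₀ * N * C = N) (h₁ : B₁ * N * C = 0) :
    B₁ = 0 := by
  have hleft : N⁻¹ * B₀ * (N * C) = 1 := by
    rw [Matrix.mul_assoc, ← Matrix.mul_assoc B₀, h₀, nonsing_inv_mul N hN]
  calc B₁ = B₁ * (N * C * (N⁻¹ * B₀)) := by rw [mul_eq_one_comm.mp hleft, Matrix.mul_one]
    _ = 0 := by rw [← Matrix.mul_assoc, ← Matrix.mul_assoc B₁, h₁, Matrix.zero_mul]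

theorem modEq_zero_of_mul_mul_transpose_modEq [DecidableEq ι] {c : ℕ} {B₀ N : Matrix ι ι ℤ}
    {B₁ : Matrix m ι ℤ} (hN : IsUnit (N.det : ZMod c))
    (h₀ : ∀ i j, (B₀ * N * B₀ᵀ) i j ≡ N i j [ZMOD c])
    (h₁ : ∀ i j, (B₁ * N * B₀ᵀ) i j ≡ 0 [ZMOD c]) (i : m) (j : ι) :
    B₁ i j ≡ 0 [ZMOD c] := by
  let φ := Int.castRingHom (ZMod c)
  have hN' : IsUnit (N.map φ).det := by rwa [← RingHom.mapMatrix_apply, ← RingHom.map_det]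
  have h₀' : B₀.map φ * N.map φ * (B₀.map φ)ᵀ = N.map φ := by
    rw [← transpose_map, ← Matrix.map_mul, ← Matrix.map_mul]
    ext i j
    exact (ZMod.intCast_eq_intCast_iff _ _ c).mpr (h₀ i j)
  have h₁' : B₁.map φ * N.map φ * (B₀.map φ)ᵀ = 0 := by
    rw [← transpose_map, ← Matrix.map_mul, ← Matrix.map_mul]
    ext i j
    simpa using (ZMod.intCast_eq_intCast_iff _ _ c).mpr (h₁ i j)
  have := congr_fun₂ (eq_zero_of_mul_mul_eq_self hN' h₀' h₁') i j
  exact (ZMod.intCast_eq_intCast_iff _ _ c).mp (by simpa using this)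

theorem mul_dvd_mul_mul_transpose_apply [CommSemiring R] {X : Matrix m ι R} {Y : Matrix n ι R}
    {a b : R} (hX : ∀ i k, a ∣ X i k) (hY : ∀ j k, b ∣ Y j k) (N : Matrix ι ι R) (i : m) (j : n) :
    a * b ∣ (X * N * Yᵀ) i j := by
  simp only [mul_apply, transpose_apply]
  exact Finset.dvd_sum fun k _ =>
    mul_dvd_mul (Finset.dvd_sum fun l _ => (hX i l).mul_right _) (hY j k)

end Matrix

theorem stmt1 (g l : ℕ) (hlg : l < g)
    (M₀ : Matrix (Fin l) (Fin l) ℤ) (hdet : Odd M₀.det)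
    (M : Matrix (Fin g) (Fin g) ℤ)
    (hM : ∀ i j : Fin g, M i j =
      if h : (i : ℕ) < l ∧ (j : ℕ) < l then M₀ ⟨i, h.1⟩ ⟨j, h.2⟩ else 0)
    (A : Matrix (Fin g) (Fin g) ℤ)
    (hAM : ∀ i j, (A * M * Aᵀ) i j ≡ M i j [ZMOD 2]) :
    (∀ i j : Fin l,
      ((A.submatrix (Fin.castLE hlg.le) (Fin.castLE hlg.le)) * M₀ *
        (A.submatrix (Fin.castLE hlg.le) (Fin.castLE hlg.le))ᵀ) i j ≡ M₀ i j [ZMOD 2]) ∧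
    (∀ (i : Fin (g - l)) (j : Fin l),
      A ⟨l + (i : ℕ), by have := i.isLt; omega⟩ (Fin.castLE hlg.le j) ≡ 0 [ZMOD 2]) ∧
    (∀ i : Fin (g - l),
      (4 : ℤ) ∣
        ((A.submatrix (fun k : Fin (g - l) => (⟨l + (k : ℕ), by have := k.isLt; omega⟩ : Fin g))
              (Fin.castLE hlg.le)) * M₀ *
          (A.submatrix (fun k : Fin (g - l) => (⟨l + (k : ℕ), by have := k.isLt; omega⟩ : Fin g))
              (Fin.castLE hlg.le))ᵀ) i i) := by
  set e₀ : Fin l → Fin g := Fin.castLE hlg.le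
  set e₁ : Fin (g - l) → Fin g := fun k => ⟨l + (k : ℕ), by have := k.isLt; omega⟩
  have hblock : A * M * Aᵀ = A.submatrix id e₀ * M₀ * (A.submatrix id e₀)ᵀ := by
    refine mul_mul_transpose_eq_of_eq_zero_off_range e₀ (Fin.castLE_injective _)
      (fun a b => by simp [hM, e₀]) (fun i j hij => ?_) A A
    rw [hM, dif_neg]
    rintro ⟨hi, hj⟩
    rcases hij with hij | hij
    exacts [hij ⟨⟨i, hi⟩, rfl⟩, hij ⟨⟨j, hj⟩, rfl⟩]
  have hentry : ∀ {p q : ℕ} (r : Fin p → Fin g) (s : Fin q → Fin g) i j,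
      (A.submatrix r e₀ * M₀ * (A.submatrix s e₀)ᵀ) i j = (A * M * Aᵀ) (r i) (s j) := by
    intros; rw [hblock]; rfl
  have hA₀ : ∀ i j, (A.submatrix e₀ e₀ * M₀ * (A.submatrix e₀ e₀)ᵀ) i j ≡ M₀ i j [ZMOD 2] := by
    intro i j
    rw [hentry]
    simpa [hM, e₀] using hAM (e₀ i) (e₀ j)
  have hA₁₀ : ∀ i j, (A.submatrix e₁ e₀ * M₀ * (A.submatrix e₀ e₀)ᵀ) i j ≡ 0 [ZMOD 2] := by
    intro i j
    rw [hentry]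
    simpa [hM, e₁] using hAM (e₁ i) (e₀ j)
  have hdet₂ : IsUnit (M₀.det : ZMod 2) := by
    rw [ZMod.intCast_eq_one_iff_odd.mpr hdet]; exact isUnit_one
  have hA₁₀_even : ∀ i j, A (e₁ i) (e₀ j) ≡ 0 [ZMOD 2] :=
    modEq_zero_of_mul_mul_transpose_modEq hdet₂ hA₀ hA₁₀
  have hA₁₀_dvd : ∀ i j, (2 : ℤ) ∣ A (e₁ i) (e₀ j) :=
    fun i j => Int.modEq_zero_iff_dvd.mp (hA₁₀_even i j)
  exact ⟨hA₀, hA₁₀_even, fun i => mul_dvd_mul_mul_transpose_apply hA₁₀_dvd hA₁₀_dvd M₀ i i⟩
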